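/- arXiv:1302.5216 — 5 statements merged into one kernel-verified Lean document; each statement's English description precedes it below -/
import Mathlib

section
/- With the maps ∂ᵢ on A = O_Q(Kⁿ) defined by ∂ᵢ(x^α) = αᵢ δᵢ(α) x^{α−εⁱ}, δᵢ(α) = ∏_{j>i} qᵢⱼ^{αⱼ}, one has the q-commutation relations ∂ᵢ∂ⱼ = qⱼᵢ ∂ⱼ∂ᵢ for all i < j (as K-linear endomorphisms of A). -/
/-! Check the identity on the spanning monomials `x^α`. Both sides send `x^α` to a multiple of
`x^{α-εⁱ-εʲ}`; the coefficients `αᵢ αⱼ δᵢ(·) δⱼ(·)` differ only in whether `δᵢ` is evaluated before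
or after lowering `αⱼ`, and for `i < j` lowering `αⱼ` by one divides `δᵢ` by exactly `qᵢⱼ = qⱼᵢ⁻¹`. -/

/-- The ordered monomial `x^α = x₁^{α₁} ⋯ xₙ^{αₙ}`. -/
def xpow {A : Type} [Monoid A] {n : ℕ} (X : Fin n → A) (α : Fin n → ℕ) : A :=
  (List.ofFn fun i => X i ^ α i).prod

/-- `δᵢ(α) = ∏_{j > i} qᵢⱼ^{αⱼ}`. -/
def deltaQ {K : Type} [Field K] {n : ℕ} (q : Fin n → Fin n → K)
    (i : Fin n) (α : Fin n → ℕ) : K :=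
  ∏ j ∈ Finset.univ.filter (i < ·), q i j ^ α j

section deltaQ

variable {K : Type} [Field K] {n : ℕ} (q : Fin n → Fin n → K)

theorem deltaQ_add_single {i j : Fin n} (hij : i < j) (β : Fin n → ℕ) (m : ℕ) :
    deltaQ q i (β + Pi.single j m) = deltaQ q i β * q i j ^ m := by
  have hj : j ∈ Finset.univ.filter (i < ·) := by simp [hij]
  simp only [deltaQ, Pi.add_apply, pow_add, Finset.prod_mul_distrib]
  congr 1
  rw [Finset.prod_eq_single_of_mem j hj fun k _ hk => by simp [Pi.single_eq_of_ne hk],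
    Pi.single_eq_same]

theorem natCast_mul_deltaQ_eq_mul_deltaQ_sub_single {i j : Fin n} (hij : i < j)
    (α : Fin n → ℕ) :
    (α j : K) * deltaQ q i α = α j * deltaQ q i (α - Pi.single j 1) * q i j := by
  rcases Nat.eq_zero_or_pos (α j) with h | h
  · simp [h]
  · have hle : Pi.single j 1 ≤ α := fun k => by
      rcases eq_or_ne k j with rfl | hk
      · simpa [Nat.one_le_iff_ne_zero] using h.ne'
      · simp [Pi.single_eq_of_ne hk]
    calc (α j : K) * deltaQ q i α
        = α j * deltaQ q i (α - Pi.single j 1 + Pi.single j 1) := by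
          rw [tsub_add_cancel_of_le hle]
      _ = α j * deltaQ q i (α - Pi.single j 1) * q i j := by
          rw [deltaQ_add_single q hij, pow_one, mul_assoc]

theorem deltaQ_sub_single_of_not_lt {i k : Fin n} (hik : ¬i < k) (α : Fin n → ℕ) (m : ℕ) :
    deltaQ q i (α - Pi.single k m) = deltaQ q i α := by
  refine Finset.prod_congr rfl fun l hl => ?_
  have hlk : l ≠ k := by
    rintro rfl
    exact hik (Finset.mem_filter.mp hl).2
  simp [Pi.single_eq_of_ne hlk]

end deltaQ

theorem quantumPolynomial_partial_qcomm_general {K A : Type} [Field K] [Ring A] [Algebra K A]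
    {n : ℕ} (q : Fin n → Fin n → K)
    (hQanti : ∀ i j, q i j * q j i = 1)
    (X : Fin n → A)
    (hspan : Submodule.span K (Set.range (xpow X)) = ⊤)
    (par : Fin n → (A →ₗ[K] A))
    (hpar : ∀ i α, par i (xpow X α) =
      ((α i : K) * deltaQ q i α) • xpow X (α - Pi.single i 1)) :
    ∀ i j : Fin n, i < j →
      (par i).comp (par j) = q j i • ((par j).comp (par i)) := by
  intro i j hij
  apply LinearMap.ext_on hspan
  rintro _ ⟨α, rfl⟩
  simp only [LinearMap.comp_apply, LinearMap.smul_apply, hpar, map_smul, smul_smul,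
    tsub_right_comm (a := α) (b := Pi.single j 1)]
  congr 1
  simp only [Pi.sub_apply, Pi.single_eq_of_ne hij.ne, Pi.single_eq_of_ne hij.ne', tsub_zero,
    deltaQ_sub_single_of_not_lt q hij.not_gt]
  linear_combination (-(α i * deltaQ q j α * α j * deltaQ q i (α - Pi.single j 1) : K)) *
      hQanti i j - (α i * deltaQ q j α * q j i : K) *
      natCast_mul_deltaQ_eq_mul_deltaQ_sub_single q hij α

/-- On `A = O_Q(Kⁿ)` (monomials `x^α` spanning `A`), the maps
`∂ᵢ(x^α) = αᵢ δᵢ(α) x^{α-εⁱ}` satisfy `∂ᵢ∂ⱼ = qⱼᵢ ∂ⱼ∂ᵢ` for `i < j`, as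
`K`-linear endomorphisms of `A`. -/
theorem quantumPolynomial_partial_qcomm {K A : Type} [Field K] [Ring A] [Algebra K A]
    {n : ℕ} (q : Fin n → Fin n → K)
    (hQanti : ∀ i j, q i j * q j i = 1) (hQdiag : ∀ i, q i i = 1)
    (hQne : ∀ i j, q i j ≠ 0)
    (X : Fin n → A)
    (hrel : ∀ i j, i < j → X i * X j = q i j • (X j * X i))
    (hspan : Submodule.span K (Set.range (xpow X)) = ⊤)
    (par : Fin n → (A →ₗ[K] A))
    (hpar : ∀ i α, par i (xpow X α) =
      ((α i : K) * deltaQ q i α) • xpow X (α - Pi.single i 1)) :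
    ∀ i j : Fin n, i < j →
      (par i).comp (par j) = q j i • ((par j).comp (par i)) :=
  quantumPolynomial_partial_qcomm_general q hQanti X hspan par hpar
end

section
/- In the quantum exterior algebra Λ^Q(Ω¹) over A built from an upper triangular right twisted multi-derivation (∂,σ) (σᵢⱼ = 0 for i > j), the top form ω̄ = ω₁ ∧ ⋯ ∧ ωₙ satisfies ω̄·a = det_σ(a)·ω̄ for all a ∈ A, where det_σ = σ₁₁ ∘ σ₂₂ ∘ ⋯ ∘ σₙₙ. -/
/-!
Write `ω_l` for the product of the `ωᵢ` over a strictly increasing list `l` of indices whose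
entries form an upper set. Pushing `a` through `ω_{i :: t} = ωᵢ ω_t` gives
`ωᵢ τ(a) ω_t = Σⱼ σᵢⱼ(τ(a)) ωⱼ ω_t`, where `τ` is the diagonal composite for `t`. Terms with
`j < i` vanish by triangularity, and those with `j > i` vanish because `ωⱼ` already occurs in
`ω_t` and the quantum exterior relations let `ωⱼ` move next to its copy, where `ωⱼ ωⱼ = 0`.
Only `j = i` survives, and induction along `l = [1, …, n]` gives the theorem.
-/

section QuantumExterior

variable {K L n : Type*} [CommSemiring K] [Ring L] [Algebra K L]

/-- `det_σ` for the index list `l`: the composite of the diagonal entries `σᵢᵢ`, `i ∈ l`. -/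
def diagComposite {A : Type*} (σ : A → Matrix n n A) (l : List n) : A → A :=
  (l.map fun i x => σ x i i).foldr (· ∘ ·) id

theorem mul_prod_map_eq_zero_of_mem (q : n → n → K) (w : n → L)
    (hanti : ∀ i j, w i * w j + q i j • (w j * w i) = 0) (hsq : ∀ i, w i * w i = 0)
    {l : List n} {j : n} (hj : j ∈ l) : w j * (l.map w).prod = 0 := by
  induction l with
  | nil => simp at hj
  | cons k t ih =>
    rw [List.map_cons, List.prod_cons, ← mul_assoc]
    rcases List.mem_cons.mp hj with rfl | hjt
    · rw [hsq, zero_mul]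
    · rw [eq_neg_of_add_eq_zero_left (hanti j k), neg_mul, smul_mul_assoc, mul_assoc,
        ih hjt, mul_zero, smul_zero, neg_zero]

theorem prod_map_mul_eq_diagComposite_mul_prod_map {A F : Type*} [Ring A] [Fintype n]
    [LinearOrder n] [FunLike F A L] [ZeroHomClass F A L] (q : n → n → K) (ι : F) (w : n → L)
    (σ : A → Matrix n n A) (htri : ∀ a i j, j < i → σ a i j = 0)
    (hcomm : ∀ a i, w i * ι a = ∑ j, ι (σ a i j) * w j)
    (hanti : ∀ i j, w i * w j + q i j • (w j * w i) = 0) (hsq : ∀ i, w i * w i = 0)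
    {l : List n} (hl : l.Pairwise (· < ·)) (hup : IsUpperSet {i | i ∈ l}) (a : A) :
    (l.map w).prod * ι a = ι (diagComposite σ l a) * (l.map w).prod := by
  induction l with
  | nil => simp [diagComposite]
  | cons i t ih =>
    obtain ⟨hi_lt, ht⟩ := List.pairwise_cons.mp hl
    have hmem_of_gt : ∀ j, i < j → j ∈ t := fun j hij =>
      (List.mem_cons.mp (hup hij.le List.mem_cons_self)).resolve_left hij.ne'
    have hup_t : IsUpperSet {j | j ∈ t} := fun j k hjk hj =>
      hmem_of_gt k ((hi_lt j hj).trans_le hjk)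
    set τ := diagComposite σ t
    have hoff : ∀ j, j ≠ i → ι (σ (τ a) i j) * (w j * (t.map w).prod) = 0 := by
      intro j hji
      rcases hji.lt_or_gt with hlt | hgt
      · rw [htri _ _ _ hlt, map_zero, zero_mul]
      · rw [mul_prod_map_eq_zero_of_mem q w hanti hsq (hmem_of_gt j hgt), mul_zero]
    calc ((i :: t).map w).prod * ι a
        = w i * ι (τ a) * (t.map w).prod := by
          rw [List.map_cons, List.prod_cons, mul_assoc, ih ht hup_t, ← mul_assoc]
      _ = ∑ j, ι (σ (τ a) i j) * (w j * (t.map w).prod) := by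
          simp only [hcomm, Finset.sum_mul, mul_assoc]
      _ = ι (σ (τ a) i i) * (w i * (t.map w).prod) :=
          Finset.sum_eq_single i (fun j _ => hoff j) (by simp)
      _ = _ := by simp [τ, diagComposite]

end QuantumExterior

theorem quantumExterior_topForm_detSigma_general {K A L : Type}
    [Field K] [Ring A] [Algebra K A] [Ring L] [Algebra K L]
    {n : ℕ} (q : Fin n → Fin n → K)
    (ι : A →ₐ[K] L) (w : Fin n → L)
    (σ : A →ₐ[K] Matrix (Fin n) (Fin n) A)
    -- upper triangular:
    (htri : ∀ (a : A) (i j : Fin n), j < i → σ a i j = 0)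
    -- the bimodule relation `ωᵢ a = Σⱼ σᵢⱼ(a) ωⱼ`:
    (hcomm : ∀ (a : A) (i : Fin n), w i * ι a = ∑ j, ι (σ a i j) * w j)
    -- the quantum exterior relations:
    (hanti : ∀ i j : Fin n, w i * w j + q i j • (w j * w i) = 0)
    (hsq : ∀ i : Fin n, w i * w i = 0) :
    ∀ a : A,
      (List.ofFn w).prod * ι a =
        ι (((List.ofFn fun i => fun x : A => σ x i i).foldr (· ∘ ·) id) a) *
          (List.ofFn w).prod := by
  intro a
  have hup : IsUpperSet {i | i ∈ List.finRange n} := by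
    simpa only [List.mem_finRange, Set.ofPred_true] using isUpperSet_univ
  simpa only [List.ofFn_eq_map, diagComposite] using prod_map_mul_eq_diagComposite_mul_prod_map q ι w σ htri hcomm
    hanti hsq (List.sortedLT_finRange n).pairwise hup a

/-- In the quantum exterior algebra `Λ^Q(Ω¹)` over `A` built from an
upper triangular right twisted multi-derivation (`σᵢⱼ = 0` for `i > j`), the top
form `ω̄ = ω₁ ∧ ⋯ ∧ ωₙ` satisfies `ω̄ · a = det_σ(a) · ω̄` for all `a ∈ A`, where
`det_σ = σ₁₁ ∘ σ₂₂ ∘ ⋯ ∘ σₙₙ`. -/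
theorem quantumExterior_topForm_detSigma {K A L : Type}
    [Field K] [Ring A] [Algebra K A] [Ring L] [Algebra K L]
    {n : ℕ} (q : Fin n → Fin n → K)
    (hQanti : ∀ i j, q i j * q j i = 1) (hQdiag : ∀ i, q i i = 1)
    (ι : A →ₐ[K] L) (w : Fin n → L)
    (σ : A →ₐ[K] Matrix (Fin n) (Fin n) A)
    -- upper triangular:
    (htri : ∀ (a : A) (i j : Fin n), j < i → σ a i j = 0)
    -- the bimodule relation `ωᵢ a = Σⱼ σᵢⱼ(a) ωⱼ`:
    (hcomm : ∀ (a : A) (i : Fin n), w i * ι a = ∑ j, ι (σ a i j) * w j)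
    -- the quantum exterior relations:
    (hanti : ∀ i j : Fin n, w i * w j + q i j • (w j * w i) = 0)
    (hsq : ∀ i : Fin n, w i * w i = 0) :
    ∀ a : A,
      (List.ofFn w).prod * ι a =
        ι (((List.ofFn fun i => fun x : A => σ x i i).foldr (· ∘ ·) id) a) *
          (List.ofFn w).prod :=
  quantumExterior_topForm_detSigma_general q ι w σ htri hcomm hanti hsq
end

section
/- On Manin's quantum n-space A = K_q[x₁,…,xₙ], define for p ∈ K\{0} the maps σᵢⱼ on monomials by σᵢⱼ = 0 for i > j, σᵢᵢ(x^α) = πᵢ(α) λ̄ᵢ(α) λᵢ(α) p^{αᵢ} x^α, and σᵢⱼ(x^α) = πⱼ(α) λ̄ᵢ(α) λⱼ(α)(p^{αⱼ} − 1) x^{α+εⁱ−εʲ} for i < j, where πᵢ(α) = ∏_{s<i} p^{αₛ}, λᵢ(α) = ∏_{j>i} q^{αⱼ}, λ̄ᵢ(α) = ∏_{j<i} q^{−αⱼ}. Then for every generator xₖ, the relations ωᵢxⱼ = qxⱼωᵢ + (p−1)xᵢωⱼ (i<j), ωᵢxᵢ = pxᵢωᵢ, ωⱼxᵢ = pq⁻¹xᵢωⱼ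 (i<j) imply ωᵢ x^α = Σ_{j≥i} σᵢⱼ(x^α) ωⱼ for all α ∈ ℕⁿ. -/
/-- `πᵢ(α) = ∏_{s < i} p^{αₛ}`. -/
def piManin {K : Type} [Field K] {n : ℕ} (p : K) (i : Fin n) (α : Fin n → ℕ) : K :=
  ∏ s ∈ Finset.univ.filter (· < i), p ^ α s

/-- `λᵢ(α) = ∏_{j > i} q^{αⱼ}`. -/
def lamManin {K : Type} [Field K] {n : ℕ} (q : K) (i : Fin n) (α : Fin n → ℕ) : K :=
  ∏ j ∈ Finset.univ.filter (i < ·), q ^ α j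

/-- `λ̄ᵢ(α) = ∏_{j < i} q^{-αⱼ}`. -/
def lambarManin {K : Type} [Field K] {n : ℕ} (q : K) (i : Fin n) (α : Fin n → ℕ) : K :=
  ∏ j ∈ Finset.univ.filter (· < i), q⁻¹ ^ α j

/-- The value `σᵢⱼ(x^α)`: zero for `i > j`,
`πᵢ(α)λ̄ᵢ(α)λᵢ(α)p^{αᵢ} x^α` for `i = j`, and
`πⱼ(α)λ̄ᵢ(α)λⱼ(α)(p^{αⱼ}-1) x^{α+εⁱ-εʲ}` for `i < j`. -/
def sigmaManin {K A : Type} [Field K] [Ring A] [Algebra K A] {n : ℕ}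
    (p q : K) (X : Fin n → A) (i j : Fin n) (α : Fin n → ℕ) : A :=
  if i = j then
    (piManin p i α * lambarManin q i α * lamManin q i α * p ^ α i) • xpow X α
  else if i < j then
    (piManin p j α * lambarManin q i α * lamManin q j α * (p ^ α j - 1)) •
      xpow X (α + Pi.single i 1 - Pi.single j 1)
  else 0

/-! Induct on `α`, splitting off the variable of smallest index: `x^α = xₘ x^β` with `β`
supported on indices `≥ m`. The relation for `ωᵢxₘ` (cases `m < i`, `m = i`, `m > i`) and the
induction hypothesis give `ωᵢ x^α` as a combination of `xₘ σᵢⱼ(x^β) ωⱼ` and, when `i < m`, of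
`xᵢ σₘⱼ(x^β) ωⱼ`. Absorbing `xₘ` into the monomial costs nothing when `m ≤ i`, since `x^β` has
no variable before `xₘ`, and a factor `q⁻¹` for the term `xₘ x^{β+εⁱ-εʲ}` when `i < m`; what is
left is a recursion for the coefficients of `σᵢⱼ`, checked factor by factor in `π`, `λ`, `λ̄`. -/

theorem Pi.induction_on_min_add_single {n : ℕ} {motive : (Fin n → ℕ) → Prop} (zero : motive 0)
    (add_single : ∀ (m : Fin n) (β : Fin n → ℕ), (∀ s < m, β s = 0) → motive β →
      motive (β + Pi.single m 1))
    (α : Fin n → ℕ) : motive α := by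
  induction hα : ∑ s, α s generalizing α with
  | zero =>
    obtain rfl : α = 0 := funext fun s => Finset.sum_eq_zero_iff.mp hα s (Finset.mem_univ s)
    exact zero
  | succ k ih =>
    obtain ⟨m, hm, hmin⟩ : ∃ m, α m ≠ 0 ∧ ∀ s < m, α s = 0 := by
      obtain ⟨s, hs⟩ : ∃ s, α s ≠ 0 := by
        by_contra! h
        simp [h] at hα
      obtain ⟨m, hm, hmin⟩ := wellFounded_lt.has_min {s | α s ≠ 0} ⟨s, hs⟩
      exact ⟨m, hm, fun s hs => by_contra fun h => hmin s h hs⟩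
    have hsplit : α = (α - Pi.single m 1) + Pi.single m 1 := by
      funext s
      simp only [Pi.add_apply, Pi.sub_apply, Pi.single_apply]
      split_ifs <;> subst_vars <;> omega
    rw [hsplit]
    refine add_single m _ (fun s hs => by simp [hs.ne, hmin s hs]) (ih _ ?_)
    rw [hsplit] at hα
    simpa [Finset.sum_add_distrib] using hα

section Monomials

variable {A : Type} [Monoid A]

@[simp]
theorem xpow_zero {n : ℕ} (X : Fin n → A) : xpow X 0 = 1 := by
  simp [xpow]

theorem xpow_succ {n : ℕ} (X : Fin (n + 1) → A) (α : Fin (n + 1) → ℕ) :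
    xpow X α = X 0 ^ α 0 * xpow (Fin.tail X) (Fin.tail α) := by
  rw [xpow, List.ofFn_succ, List.prod_cons]
  rfl

theorem xpow_add_single {n : ℕ} (X : Fin n → A) {m : Fin n} {β : Fin n → ℕ}
    (hβ : ∀ s < m, β s = 0) : xpow X (β + Pi.single m 1) = X m * xpow X β := by
  induction n with
  | zero => exact m.elim0
  | succ n ih =>
    rw [xpow_succ, xpow_succ X β]
    cases m using Fin.cases with
    | zero =>
      have htail : Fin.tail (β + Pi.single 0 1) = Fin.tail β := by
        funext s
        simp [Fin.tail, Fin.succ_ne_zero]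
      simp [htail, pow_succ', mul_assoc]
    | succ m =>
      have htail : Fin.tail (β + Pi.single m.succ 1) = Fin.tail β + Pi.single m 1 := by
        funext s
        simp [Fin.tail, Pi.single_apply]
      rw [htail, ih (Fin.tail X) (β := Fin.tail β)
        fun s hs => hβ s.succ (Fin.succ_lt_succ_iff.mpr hs)]
      simp [hβ 0 (Fin.succ_pos m), Fin.tail]

theorem xpow_add_single_add_single_sub_single {n : ℕ} (X : Fin n → A) {i j m : Fin n}
    {β : Fin n → ℕ} (hmi : m ≤ i) (hij : i ≤ j) (hβ : ∀ s < m, β s = 0) :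
    xpow X (β + Pi.single m 1 + Pi.single i 1 - Pi.single j 1) =
      X m * xpow X (β + Pi.single i 1 - Pi.single j 1) := by
  have hexp : β + Pi.single m 1 + Pi.single i 1 - Pi.single j 1 =
      β + Pi.single i 1 - Pi.single j 1 + Pi.single m 1 := by
    funext s
    simp only [Pi.add_apply, Pi.sub_apply, Pi.single_apply]
    split_ifs <;> omega
  rw [hexp, xpow_add_single]
  intro s hs
  simp [(hs.trans_le hmi).ne, (hs.trans_le (hmi.trans hij)).ne, hβ s hs]

end Monomials

theorem Finset.prod_pow_add_single {ι M : Type*} [DecidableEq ι] [CommMonoid M] (r : M)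
    (S : Finset ι) (β : ι → ℕ) (m : ι) :
    ∏ s ∈ S, r ^ (β + Pi.single m 1 : ι → ℕ) s = (if m ∈ S then r else 1) * ∏ s ∈ S, r ^ β s := by
  rw [mul_comm]
  simp only [Pi.add_apply, pow_add, Finset.prod_mul_distrib]
  congr 1
  simp [Pi.single_apply, pow_ite]

section Coefficients

variable {K : Type} [Field K] {n : ℕ}

theorem piManin_add_single (p : K) (j m : Fin n) (β : Fin n → ℕ) :
    piManin p j (β + Pi.single m 1) = (if m < j then p else 1) * piManin p j β := by
  rw [piManin, piManin, Finset.prod_pow_add_single]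
  simp

theorem lamManin_add_single (q : K) (j m : Fin n) (β : Fin n → ℕ) :
    lamManin q j (β + Pi.single m 1) = (if j < m then q else 1) * lamManin q j β := by
  rw [lamManin, lamManin, Finset.prod_pow_add_single]
  simp

theorem lambarManin_add_single (q : K) (i m : Fin n) (β : Fin n → ℕ) :
    lambarManin q i (β + Pi.single m 1) = (if m < i then q⁻¹ else 1) * lambarManin q i β := by
  rw [lambarManin, lambarManin, Finset.prod_pow_add_single]
  simp

theorem lambarManin_eq_one (q : K) {i : Fin n} {β : Fin n → ℕ} (hβ : ∀ s < i, β s = 0) :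
    lambarManin q i β = 1 :=
  Finset.prod_eq_one fun s hs => by simp [hβ s (Finset.mem_filter.mp hs).2]

def sigmaCoeff (p q : K) (i j : Fin n) (α : Fin n → ℕ) : K :=
  if i = j then piManin p i α * lambarManin q i α * lamManin q i α * p ^ α i
  else if i < j then piManin p j α * lambarManin q i α * lamManin q j α * (p ^ α j - 1)
  else 0

variable (p q : K) {i j m : Fin n} {β : Fin n → ℕ}

theorem sigmaCoeff_eq_zero_of_lt (hji : j < i) (α : Fin n → ℕ) : sigmaCoeff p q i j α = 0 := by
  simp [sigmaCoeff, hji.ne', hji.not_gt]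

theorem sigmaCoeff_eq_zero_of_apply_eq_zero (hij : i < j) (hβ : β j = 0) :
    sigmaCoeff p q i j β = 0 := by
  simp [sigmaCoeff, hij.ne, hij, hβ]

theorem sigmaCoeff_add_single_of_lt (hmi : m < i) (j : Fin n) :
    sigmaCoeff p q i j (β + Pi.single m 1) = p * q⁻¹ * sigmaCoeff p q i j β := by
  rcases lt_trichotomy i j with hij | rfl | hij
  · simp [sigmaCoeff, piManin_add_single, lamManin_add_single, lambarManin_add_single,
      hij, hij.ne, hmi, hmi.trans hij, (hmi.trans hij).not_gt, (hmi.trans hij).ne']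
    ring
  · simp [sigmaCoeff, piManin_add_single, lamManin_add_single, lambarManin_add_single,
      hmi, hmi.not_gt, hmi.ne']
    ring
  · simp [sigmaCoeff_eq_zero_of_lt, hij]

theorem sigmaCoeff_add_single_self (j : Fin n) :
    sigmaCoeff p q m j (β + Pi.single m 1) = p * sigmaCoeff p q m j β := by
  rcases lt_trichotomy m j with hmj | rfl | hmj
  · simp [sigmaCoeff, piManin_add_single, lamManin_add_single, lambarManin_add_single,
      hmj, hmj.ne, hmj.ne', hmj.not_gt]
    ring
  · simp [sigmaCoeff, piManin_add_single, lamManin_add_single, lambarManin_add_single,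
      pow_succ]
    ring
  · simp [sigmaCoeff_eq_zero_of_lt, hmj]

theorem sigmaCoeff_diag_add_single_of_gt (him : i < m) :
    sigmaCoeff p q i i (β + Pi.single m 1) = q * sigmaCoeff p q i i β := by
  simp [sigmaCoeff, piManin_add_single, lamManin_add_single, lambarManin_add_single,
    him, him.ne, him.not_gt]
  ring

theorem sigmaCoeff_add_single_of_gt_of_le (him : i < m) (hmj : m ≤ j)
    (hβ : ∀ s < m, β s = 0) :
    sigmaCoeff p q i j (β + Pi.single m 1) =
      sigmaCoeff p q i j β + (p - 1) * sigmaCoeff p q m j β := by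
  have hij := him.trans_le hmj
  have hbar_i : lambarManin q i β = 1 := lambarManin_eq_one q fun s hs => hβ s (hs.trans him)
  have hbar_m : lambarManin q m β = 1 := lambarManin_eq_one q hβ
  rcases hmj.lt_or_eq with hmj | rfl
  · simp [sigmaCoeff, piManin_add_single, lamManin_add_single, lambarManin_add_single,
      hij, hij.ne, hmj, hmj.ne, hmj.ne', hmj.not_gt, him.not_gt, hbar_i, hbar_m]
    ring
  · simp [sigmaCoeff, piManin_add_single, lamManin_add_single, lambarManin_add_single,
      hij, hij.ne, him.not_gt, hbar_i, hbar_m, pow_succ]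
    ring

end Coefficients

section Sigma

variable {K L : Type} [Field K] [Ring L] [Algebra K L] {n : ℕ} (p q : K) (X : Fin n → L)

theorem sigmaManin_eq_smul (i j : Fin n) (α : Fin n → ℕ) :
    sigmaManin p q X i j α =
      sigmaCoeff p q i j α • xpow X (α + Pi.single i 1 - Pi.single j 1) := by
  unfold sigmaManin sigmaCoeff
  split_ifs with h <;> simp [h]

theorem sigmaManin_zero (i j : Fin n) : sigmaManin p q X i j 0 = if i = j then 1 else 0 := by
  unfold sigmaManin
  split_ifs <;> simp [piManin, lamManin, lambarManin]

variable {p q X} {i j m : Fin n} {β : Fin n → ℕ}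

theorem X_mul_xpow_add_single_sub_single (hq : q ≠ 0)
    (hrel : ∀ i j : Fin n, i < j → X i * X j = q • (X j * X i))
    (him : i < m) (hmj : m ≤ j) (hβj : β j ≠ 0) (hβ : ∀ s < m, β s = 0) :
    X m * xpow X (β + Pi.single i 1 - Pi.single j 1) =
      q⁻¹ • xpow X (β + Pi.single m 1 + Pi.single i 1 - Pi.single j 1) := by
  set γ := β - Pi.single j 1
  have hγ : ∀ s < m, γ s = 0 := fun s hs => by simp [γ, hβ s hs]
  have hγi : β + Pi.single i 1 - Pi.single j 1 = γ + Pi.single i 1 := by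
    funext s
    simp only [γ, Pi.add_apply, Pi.sub_apply, Pi.single_apply]
    split_ifs <;> omega
  have hγmi : β + Pi.single m 1 + Pi.single i 1 - Pi.single j 1 =
      γ + Pi.single m 1 + Pi.single i 1 := by
    funext s
    simp only [γ, Pi.add_apply, Pi.sub_apply, Pi.single_apply]
    split_ifs <;> subst_vars <;> omega
  have hγm : ∀ s < i, (γ + Pi.single m 1 : Fin n → ℕ) s = 0 := fun s hs => by
    simp [(hs.trans him).ne, hγ s (hs.trans him)]
  have hXmi : X m * X i = q⁻¹ • (X i * X m) := by
    rw [hrel i m him, smul_smul, inv_mul_cancel₀ hq, one_smul]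
  rw [hγi, hγmi, xpow_add_single X fun s hs => hγ s (hs.trans him), ← mul_assoc, hXmi,
    smul_mul_assoc, mul_assoc, ← xpow_add_single X hγ, ← xpow_add_single X hγm]

theorem sigmaManin_add_single_of_le {c : K} (hmi : m ≤ i) (hβ : ∀ s < m, β s = 0)
    (hc : ∀ j, sigmaCoeff p q i j (β + Pi.single m 1) = c * sigmaCoeff p q i j β) (j : Fin n) :
    sigmaManin p q X i j (β + Pi.single m 1) = c • (X m * sigmaManin p q X i j β) := by
  rw [sigmaManin_eq_smul, sigmaManin_eq_smul, hc, mul_smul_comm, smul_smul]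
  rcases lt_or_ge j i with hji | hij
  · simp [sigmaCoeff_eq_zero_of_lt p q hji]
  · rw [xpow_add_single_add_single_sub_single X hmi hij hβ]

theorem sigmaManin_add_single_of_gt (hq : q ≠ 0)
    (hrel : ∀ i j : Fin n, i < j → X i * X j = q • (X j * X i))
    (him : i < m) (hβ : ∀ s < m, β s = 0) (j : Fin n) :
    sigmaManin p q X i j (β + Pi.single m 1) =
      q • (X m * sigmaManin p q X i j β) + (p - 1) • (X i * sigmaManin p q X m j β) := by
  rcases lt_or_ge j m with hjm | hmj
  · rw [sigmaManin_eq_smul p q X m j, sigmaCoeff_eq_zero_of_lt p q hjm, zero_smul, mul_zero,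
      smul_zero, add_zero]
    rcases lt_trichotomy j i with hji | rfl | hij
    · simp [sigmaManin_eq_smul, sigmaCoeff_eq_zero_of_lt p q hji]
    · simp [sigmaManin_eq_smul, sigmaCoeff_diag_add_single_of_gt p q him, xpow_add_single X hβ,
        smul_smul]
    · simp [sigmaManin_eq_smul, sigmaCoeff_eq_zero_of_apply_eq_zero p q hij, hβ j hjm, hjm.ne]
  · have hij := him.trans_le hmj
    have hXi : X i * xpow X (β + Pi.single m 1 - Pi.single j 1) =
        xpow X (β + Pi.single m 1 + Pi.single i 1 - Pi.single j 1) := by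
      rw [add_right_comm, xpow_add_single_add_single_sub_single X him.le hmj
        fun s hs => hβ s (hs.trans him)]
    simp only [sigmaManin_eq_smul, sigmaCoeff_add_single_of_gt_of_le p q him hmj hβ,
      mul_smul_comm, smul_smul, hXi]
    -- For `β j = 0` the truncated exponent `β + εⁱ - εʲ` is wrong, but its coefficient vanishes.
    by_cases hβj : β j = 0
    · simp [sigmaCoeff_eq_zero_of_apply_eq_zero p q hij hβj]
    · rw [X_mul_xpow_add_single_sub_single hq hrel him hmj hβj hβ, smul_smul, ← add_smul]
      field_simp

theorem W_mul_xpow_add_single {W : Fin n → L} (hq : q ≠ 0)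
    (hrel : ∀ i j : Fin n, i < j → X i * X j = q • (X j * X i))
    (hw1 : ∀ i j : Fin n, i < j →
      W i * X j = q • (X j * W i) + (p - 1) • (X i * W j))
    (hw2 : ∀ i : Fin n, W i * X i = p • (X i * W i))
    (hw3 : ∀ i j : Fin n, i < j → W j * X i = (p * q⁻¹) • (X i * W j))
    {m : Fin n} {β : Fin n → ℕ} (hβ : ∀ s < m, β s = 0)
    (ih : ∀ i, W i * xpow X β = ∑ j, sigmaManin p q X i j β * W j) (i : Fin n) :
    W i * xpow X (β + Pi.single m 1) = ∑ j, sigmaManin p q X i j (β + Pi.single m 1) * W j := by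
  rw [xpow_add_single X hβ, ← mul_assoc]
  rcases lt_trichotomy m i with hmi | rfl | him
  · rw [hw3 m i hmi, smul_mul_assoc, mul_assoc, ih, Finset.mul_sum, Finset.smul_sum]
    refine Finset.sum_congr rfl fun j _ => ?_
    rw [sigmaManin_add_single_of_le hmi.le hβ (sigmaCoeff_add_single_of_lt p q hmi),
      smul_mul_assoc, mul_assoc]
  · rw [hw2, smul_mul_assoc, mul_assoc, ih, Finset.mul_sum, Finset.smul_sum]
    refine Finset.sum_congr rfl fun j _ => ?_
    rw [sigmaManin_add_single_of_le le_rfl hβ (sigmaCoeff_add_single_self p q),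
      smul_mul_assoc, mul_assoc]
  · rw [hw1 i m him, add_mul, smul_mul_assoc, smul_mul_assoc, mul_assoc, mul_assoc, ih, ih,
      Finset.mul_sum, Finset.mul_sum, Finset.smul_sum, Finset.smul_sum, ← Finset.sum_add_distrib]
    refine Finset.sum_congr rfl fun j _ => ?_
    rw [sigmaManin_add_single_of_gt hq hrel him hβ, add_mul, smul_mul_assoc, smul_mul_assoc,
      mul_assoc, mul_assoc]

end Sigma

theorem maninQuantumSpace_sigma_general {K L : Type} [Field K] [Ring L] [Algebra K L]
    {n : ℕ} (p q : K) (hq : q ≠ 0)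
    (X W : Fin n → L)
    (hrel : ∀ i j : Fin n, i < j → X i * X j = q • (X j * X i))
    (hw1 : ∀ i j : Fin n, i < j →
      W i * X j = q • (X j * W i) + (p - 1) • (X i * W j))
    (hw2 : ∀ i : Fin n, W i * X i = p • (X i * W i))
    (hw3 : ∀ i j : Fin n, i < j → W j * X i = (p * q⁻¹) • (X i * W j)) :
    ∀ (i : Fin n) (α : Fin n → ℕ),
      W i * xpow X α = ∑ j, sigmaManin p q X i j α * W j := by
  intro i α
  induction α using Pi.induction_on_min_add_single generalizing i with
  | zero => simp [sigmaManin_zero]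
  | add_single m β hβ ih => exact W_mul_xpow_add_single hq hrel hw1 hw2 hw3 hβ ih i

/-- On Manin's quantum `n`-space, the commutation relations
`ωᵢxⱼ = qxⱼωᵢ + (p-1)xᵢωⱼ` (`i<j`), `ωᵢxᵢ = pxᵢωᵢ`, `ωⱼxᵢ = pq⁻¹xᵢωⱼ` (`i<j`)
imply `ωᵢ x^α = Σ_{j ≥ i} σᵢⱼ(x^α) ωⱼ` for all `α ∈ ℕⁿ`, with `σᵢⱼ` as in
`sigmaManin`. -/
theorem maninQuantumSpace_sigma {K L : Type} [Field K] [Ring L] [Algebra K L]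
    {n : ℕ} (p q : K) (hp : p ≠ 0) (hq : q ≠ 0)
    (X W : Fin n → L)
    (hrel : ∀ i j : Fin n, i < j → X i * X j = q • (X j * X i))
    (hw1 : ∀ i j : Fin n, i < j →
      W i * X j = q • (X j * W i) + (p - 1) • (X i * W j))
    (hw2 : ∀ i : Fin n, W i * X i = p • (X i * W i))
    (hw3 : ∀ i j : Fin n, i < j → W j * X i = (p * q⁻¹) • (X i * W j)) :
    ∀ (i : Fin n) (α : Fin n → ℕ),
      W i * xpow X α = ∑ j, sigmaManin p q X i j α * W j :=
  maninQuantumSpace_sigma_general p q hq X W hrel hw1 hw2 hw3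
end

section
/- On Manin's quantum n-space, with ∂ᵢ(x^α) = δᵢ(α) x^{α−εⁱ} where δᵢ(α) = πᵢ(α)λᵢ(α)(p^{αᵢ}−1)/(p−1), πᵢ(α) = ∏_{s<i} p^{αₛ}, λᵢ(α) = ∏_{j>i} q^{αⱼ}, one has ∂ᵢ∂ⱼ = pq⁻¹ ∂ⱼ∂ᵢ for all i < j. -/
/-- `δᵢ(α) = πᵢ(α)λᵢ(α)(p^{αᵢ}-1)/(p-1)`. -/
def deltaManin {K : Type} [Field K] {n : ℕ} (p q : K) (i : Fin n) (α : Fin n → ℕ) : K :=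
  piManin p i α * lamManin q i α * ((p ^ α i - 1) / (p - 1))

section SubSingle

variable {ι : Type*} [DecidableEq ι]

lemma sub_single_apply_of_ne (α : ι → ℕ) {k s : ι} (h : s ≠ k) :
    (α - Pi.single k 1 : ι → ℕ) s = α s := by
  simp [Pi.single_eq_of_ne h]

lemma sub_single_sub_single_comm (α : ι → ℕ) (i j : ι) :
    α - Pi.single j 1 - Pi.single i 1 = α - Pi.single i 1 - Pi.single j 1 := by
  funext k
  simp [Nat.sub_sub, Nat.add_comm]

variable {M : Type*} [CommMonoid M] (c : M) (α : ι → ℕ) {S : Finset ι} {k : ι}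

lemma prod_pow_sub_single_of_notMem (hk : k ∉ S) :
    ∏ s ∈ S, c ^ (α - Pi.single k 1 : ι → ℕ) s = ∏ s ∈ S, c ^ α s :=
  Finset.prod_congr rfl fun s hs =>
    by rw [sub_single_apply_of_ne α (ne_of_mem_of_not_mem hs hk)]

lemma prod_pow_sub_single_mul_of_mem (hk : k ∈ S) (hαk : α k ≠ 0) :
    (∏ s ∈ S, c ^ (α - Pi.single k 1 : ι → ℕ) s) * c = ∏ s ∈ S, c ^ α s := by
  rw [← Finset.mul_prod_erase _ _ hk, ← Finset.mul_prod_erase _ _ hk,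
    prod_pow_sub_single_of_notMem c α (Finset.notMem_erase k S), mul_right_comm, ← pow_succ]
  simp [Nat.sub_add_cancel (Nat.one_le_iff_ne_zero.mpr hαk)]

end SubSingle

section DeltaManin

variable {K : Type} [Field K] {n : ℕ} (p q : K) {i j : Fin n} (α : Fin n → ℕ)

lemma piManin_sub_single_of_le (hij : i ≤ j) :
    piManin p i (α - Pi.single j 1) = piManin p i α :=
  prod_pow_sub_single_of_notMem p α (by simpa using hij)

lemma lamManin_sub_single_of_le (hij : i ≤ j) :
    lamManin q j (α - Pi.single i 1) = lamManin q j α :=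
  prod_pow_sub_single_of_notMem q α (by simpa using hij)

lemma piManin_sub_single_mul_of_lt (hij : i < j) (hαi : α i ≠ 0) :
    piManin p j (α - Pi.single i 1) * p = piManin p j α :=
  prod_pow_sub_single_mul_of_mem p α (by simpa using hij) hαi

lemma lamManin_sub_single_mul_of_lt (hij : i < j) (hαj : α j ≠ 0) :
    lamManin q i (α - Pi.single j 1) * q = lamManin q i α :=
  prod_pow_sub_single_mul_of_mem q α (by simpa using hij) hαj

variable {α} in
lemma deltaManin_eq_zero_of_apply_eq_zero (hαi : α i = 0) : deltaManin p q i α = 0 := by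
  simp [deltaManin, hαi]

lemma deltaManin_mul_deltaManin_sub_single (hq : q ≠ 0) (hij : i < j) :
    deltaManin p q j α * deltaManin p q i (α - Pi.single j 1)
      = p * q⁻¹ * (deltaManin p q i α * deltaManin p q j (α - Pi.single i 1)) := by
  have hαji : (α - Pi.single i 1 : Fin n → ℕ) j = α j := sub_single_apply_of_ne α hij.ne'
  have hαij : (α - Pi.single j 1 : Fin n → ℕ) i = α i := sub_single_apply_of_ne α hij.ne
  -- If `αⱼ = 0` or `αᵢ = 0`, both sides vanish, whatever the truncated `α - εᵏ` is.
  rcases eq_or_ne (α j) 0 with hαj | hαj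
  · rw [deltaManin_eq_zero_of_apply_eq_zero p q hαj,
      deltaManin_eq_zero_of_apply_eq_zero p q (hαji.trans hαj)]
    ring
  rcases eq_or_ne (α i) 0 with hαi | hαi
  · rw [deltaManin_eq_zero_of_apply_eq_zero p q hαi,
      deltaManin_eq_zero_of_apply_eq_zero p q (hαij.trans hαi)]
    ring
  simp only [deltaManin, hαji, hαij, piManin_sub_single_of_le p α hij.le,
    lamManin_sub_single_of_le q α hij.le, ← piManin_sub_single_mul_of_lt p α hij hαi,
    ← lamManin_sub_single_mul_of_lt q α hij hαj]
  field_simp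

end DeltaManin

theorem maninQuantumSpace_partial_qcomm_general {K A : Type} [Field K] [Ring A] [Algebra K A]
    {n : ℕ} (p q : K) (hq : q ≠ 0)
    (X : Fin n → A)
    (hspan : Submodule.span K (Set.range (xpow X)) = ⊤)
    (par : Fin n → (A →ₗ[K] A))
    (hpar : ∀ i α, par i (xpow X α) =
      deltaManin p q i α • xpow X (α - Pi.single i 1)) :
    ∀ i j : Fin n, i < j →
      (par i).comp (par j) = (p * q⁻¹) • ((par j).comp (par i)) := by
  intro i j hij
  refine LinearMap.ext_on hspan ?_
  rintro _ ⟨α, rfl⟩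
  simp only [LinearMap.comp_apply, LinearMap.smul_apply, hpar, map_smul, smul_smul]
  rw [sub_single_sub_single_comm α i j, deltaManin_mul_deltaManin_sub_single p q α hq hij]

/-- On Manin's quantum `n`-space, the maps
`∂ᵢ(x^α) = δᵢ(α) x^{α-εⁱ}` satisfy `∂ᵢ∂ⱼ = pq⁻¹ ∂ⱼ∂ᵢ` for all `i < j`. -/
theorem maninQuantumSpace_partial_qcomm {K A : Type} [Field K] [Ring A] [Algebra K A]
    {n : ℕ} (p q : K) (hp : p ≠ 0) (hp1 : p ≠ 1) (hq : q ≠ 0)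
    (X : Fin n → A)
    (hrel : ∀ i j : Fin n, i < j → X i * X j = q • (X j * X i))
    (hspan : Submodule.span K (Set.range (xpow X)) = ⊤)
    (par : Fin n → (A →ₗ[K] A))
    (hpar : ∀ i α, par i (xpow X α) =
      deltaManin p q i α • xpow X (α - Pi.single i 1)) :
    ∀ i j : Fin n, i < j →
      (par i).comp (par j) = (p * q⁻¹) • ((par j).comp (par i)) :=
  maninQuantumSpace_partial_qcomm_general p q hq X hspan par hpar
end

section
/- With the maps ∂ᵢ and σ = (σᵢⱼ) on Manin's quantum n-space as defined (two-parameter p,q calculus), for all k < i < j the identity ∂ᵢ σₖⱼ = pq⁻¹ ∂ⱼ σₖᵢ holds as K-linear maps on A. -/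
/-! On a monomial `x^α` both sides are multiples of `x^(α + εᵏ - εⁱ - εʲ)`. Shifting `α`
by `εᵏ - εʲ` multiplies `πᵢ` by `p` and `λᵢ` by `q⁻¹`, while shifting it by `εᵏ - εⁱ`
leaves `πⱼ` and `λⱼ` unchanged; this produces the factor `pq⁻¹`, and the remaining coefficients
`(p^{αⱼ} - 1)(p^{αᵢ} - 1)/(p - 1)` are symmetric in `i` and `j`. -/

namespace Finset

variable {ι M : Type*} [DecidableEq ι] [CommMonoid M]

theorem prod_pow_add_single_s14 (S : Finset ι) (c : M) (α : ι → ℕ) (a : ι) :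
    ∏ s ∈ S, c ^ (α + Pi.single a 1 : ι → ℕ) s =
      (if a ∈ S then c else 1) * ∏ s ∈ S, c ^ α s := by
  simp only [Pi.add_apply, pow_add, prod_mul_distrib, Pi.single_apply, pow_ite, pow_one,
    pow_zero, prod_ite_eq', mul_comm]

theorem prod_pow_sub_single (S : Finset ι) (c : M) {α : ι → ℕ} {b : ι} (hb : α b ≠ 0) :
    (if b ∈ S then c else 1) * ∏ s ∈ S, c ^ (α - Pi.single b 1 : ι → ℕ) s =
      ∏ s ∈ S, c ^ α s := by
  have hα : α - Pi.single b 1 + Pi.single b 1 = α := by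
    ext s
    rcases eq_or_ne s b with rfl | hs
    · simp only [Pi.add_apply, Pi.sub_apply, Pi.single_eq_same]
      omega
    · simp [hs]
  conv_rhs => rw [← hα]
  rw [prod_pow_add_single_s14]

theorem prod_pow_add_single_sub_single (S : Finset ι) (c : M) {α : ι → ℕ} (a : ι) {b : ι}
    (hb : α b ≠ 0) :
    (if b ∈ S then c else 1) *
        ∏ s ∈ S, c ^ (α + Pi.single a 1 - Pi.single b 1 : ι → ℕ) s =
      (if a ∈ S then c else 1) * ∏ s ∈ S, c ^ α s := by
  have hb' : (α + Pi.single a 1 : ι → ℕ) b ≠ 0 := by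
    simp only [Pi.add_apply]
    omega
  rw [prod_pow_sub_single S c hb', prod_pow_add_single_s14]

end Finset

theorem add_single_sub_single_apply_of_ne {ι : Type*} [DecidableEq ι] (α : ι → ℕ)
    {a b s : ι} (ha : s ≠ a) (hb : s ≠ b) :
    (α + Pi.single a 1 - Pi.single b 1 : ι → ℕ) s = α s := by
  simp [ha, hb]

section Manin

variable {K : Type} [Field K] {n : ℕ} {α : Fin n → ℕ} {k i j : Fin n}

theorem piManin_add_single_sub_single_of_lt_of_le (p : K) (hk : k < i) (hj : i ≤ j)
    (hα : α j ≠ 0) :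
    piManin p i (α + Pi.single k 1 - Pi.single j 1) = p * piManin p i α := by
  have h := Finset.prod_pow_add_single_sub_single {s | s < i} p k hα
  simp only [Finset.mem_filter, Finset.mem_univ, true_and, hk, hj.not_gt, if_true,
    if_false, one_mul] at h
  exact h

theorem piManin_add_single_sub_single_of_lt_of_lt {p : K} (hp : p ≠ 0) (hk : k < j) (hi : i < j)
    (hα : α i ≠ 0) :
    piManin p j (α + Pi.single k 1 - Pi.single i 1) = piManin p j α := by
  have h := Finset.prod_pow_add_single_sub_single {s | s < j} p k hα
  simp only [Finset.mem_filter, Finset.mem_univ, true_and, hk, hi, if_true] at h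
  exact mul_left_cancel₀ hp h

theorem lamManin_add_single_sub_single_of_le_of_lt {q : K} (hq : q ≠ 0) (hk : k ≤ i)
    (hj : i < j) (hα : α j ≠ 0) :
    lamManin q i (α + Pi.single k 1 - Pi.single j 1) = q⁻¹ * lamManin q i α := by
  have h := Finset.prod_pow_add_single_sub_single {s | i < s} q k hα
  simp only [Finset.mem_filter, Finset.mem_univ, true_and, hj, hk.not_gt, if_true,
    if_false, one_mul] at h
  rw [eq_inv_mul_iff_mul_eq₀ hq]
  exact h

theorem lamManin_add_single_sub_single_of_le_of_le (q : K) (hk : k ≤ j) (hi : i ≤ j) :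
    lamManin q j (α + Pi.single k 1 - Pi.single i 1) = lamManin q j α := by
  refine Finset.prod_congr rfl fun s hs => ?_
  have hjs : j < s := (Finset.mem_filter.mp hs).2
  rw [add_single_sub_single_apply_of_ne α (hk.trans_lt hjs).ne' (hi.trans_lt hjs).ne']

theorem sigmaManin_of_lt {A : Type} [Ring A] [Algebra K A] (p q : K) (X : Fin n → A)
    (α : Fin n → ℕ) (h : k < j) :
    sigmaManin p q X k j α =
      (piManin p j α * lambarManin q k α * lamManin q j α * (p ^ α j - 1)) •
        xpow X (α + Pi.single k 1 - Pi.single j 1) := by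
  simp [sigmaManin, h.ne, h]

end Manin

theorem maninQuantumSpace_partial_sigma_rel_general {K A : Type}
    [Field K] [Ring A] [Algebra K A]
    {n : ℕ} (p q : K) (hp : p ≠ 0) (hq : q ≠ 0)
    (X : Fin n → A)
    (hspan : Submodule.span K (Set.range (xpow X)) = ⊤)
    (par : Fin n → (A →ₗ[K] A)) (σ : Fin n → Fin n → (A →ₗ[K] A))
    (hpar : ∀ l α, par l (xpow X α) =
      (piManin p l α * lamManin q l α * ((p ^ α l - 1) / (p - 1))) •
        xpow X (α - Pi.single l 1))
    (hσ : ∀ i j α, σ i j (xpow X α) = sigmaManin p q X i j α) :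
    ∀ k i j : Fin n, k < i → i < j →
      (par i).comp (σ k j) = (p * q⁻¹) • ((par j).comp (σ k i)) := by
  intro k i j hki hij
  refine LinearMap.ext_on_range hspan fun α => ?_
  simp only [LinearMap.comp_apply, LinearMap.smul_apply, hσ, sigmaManin_of_lt _ _ _ _
    (hki.trans hij), sigmaManin_of_lt _ _ _ _ hki, map_smul, hpar, smul_smul,
    add_single_sub_single_apply_of_ne α hki.ne' hij.ne,
    add_single_sub_single_apply_of_ne α (hki.trans hij).ne' hij.ne']
  rw [tsub_right_comm (a := α + Pi.single k 1)]
  by_cases hαi : α i = 0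
  · simp [hαi]
  by_cases hαj : α j = 0
  · simp [hαj]
  rw [piManin_add_single_sub_single_of_lt_of_le p hki hij.le hαj,
    lamManin_add_single_sub_single_of_le_of_lt hq hki.le hij hαj,
    piManin_add_single_sub_single_of_lt_of_lt hp (hki.trans hij) hij hαi,
    lamManin_add_single_sub_single_of_le_of_le q (hki.trans hij).le hij.le]
  congr 1
  ring

/-- With the two-parameter `(p,q)` maps `∂ᵢ` and `σ = (σᵢⱼ)` on
Manin's quantum `n`-space, for all `k < i < j` one has
`∂ᵢ σₖⱼ = pq⁻¹ ∂ⱼ σₖᵢ` as `K`-linear maps on `A`. -/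
theorem maninQuantumSpace_partial_sigma_rel {K A : Type}
    [Field K] [Ring A] [Algebra K A]
    {n : ℕ} (p q : K) (hp : p ≠ 0) (hp1 : p ≠ 1) (hq : q ≠ 0)
    (X : Fin n → A)
    (hrel : ∀ i j : Fin n, i < j → X i * X j = q • (X j * X i))
    (hspan : Submodule.span K (Set.range (xpow X)) = ⊤)
    (par : Fin n → (A →ₗ[K] A)) (σ : Fin n → Fin n → (A →ₗ[K] A))
    (hpar : ∀ l α, par l (xpow X α) =
      (piManin p l α * lamManin q l α * ((p ^ α l - 1) / (p - 1))) •
        xpow X (α - Pi.single l 1))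
    (hσ : ∀ i j α, σ i j (xpow X α) = sigmaManin p q X i j α) :
    ∀ k i j : Fin n, k < i → i < j →
      (par i).comp (σ k j) = (p * q⁻¹) • ((par j).comp (σ k i)) :=
  maninQuantumSpace_partial_sigma_rel_general p q hp hq X hspan par σ hpar hσ
end
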